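/- Let $\eta$ be a (signed, locally finite) measure on $\mathbb{C}$ with $0 \notin \operatorname{supp}\eta$, and suppose $S := \sup_{0 \le r < R < +\infty} \ell_\eta^{\vdash}(r,R) < +\infty$. Then there exists a positive measure $\alpha$ supported on $\mathbb{R}^+ \setminus \{0\}$ such that $\sup_{0 \le r < R < +\infty} |\ell_{\eta+\alpha}^{\vdash}(r,R)| \le 2S$. Moreover, if $\eta$ has finite upper density, then $\alpha$ can be chosen of finite upper density. -/

import Mathlib

open MeasureTheory Filter

/-- The annulus `{z : r < |z| ≤ R}` in `ℂ`. -/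
def annulus (r R : ℝ) : Set ℂ := {z : ℂ | r < ‖z‖ ∧ ‖z‖ ≤ R}

/-- Right logarithmic function of intervals: `∫_{r<|z|≤R} Re⁺(1/z) dν`. -/
noncomputable def ellP (ν : Measure ℂ) (r R : ℝ) : ℝ :=
  ∫ z in annulus r R, max (1 / z).re 0 ∂ν

/-- Left logarithmic function of intervals: `∫_{r<|z|≤R} Re⁻(1/z) dν`. -/
noncomputable def ellM (ν : Measure ℂ) (r R : ℝ) : ℝ :=
  ∫ z in annulus r R, max (-(1 / z).re) 0 ∂ν

/-- The logarithmic submeasure `ℓ_ν(r,R)`. -/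
noncomputable def ell (ν : Measure ℂ) (r R : ℝ) : ℝ := max (ellP ν r R) (ellM ν r R)

/-- Radial counting function `ν^rad(t) = ν(t·𝔻̄)`. -/
noncomputable def rad (ν : Measure ℂ) (t : ℝ) : ℝ := (ν (Metric.closedBall 0 t)).toReal

/-- Finite upper density: `limsup_{t→∞} ν^rad(t)/t < +∞`. -/
def FiniteUpperDensity (ν : Measure ℂ) : Prop := ∃ C : ℝ, ∀ᶠ t in atTop, rad ν t ≤ C * t

/-- Right logarithmic function of the signed measure `η = ηp - ηm`. -/
noncomputable def ellPdiff (ηp ηm : Measure ℂ) (r R : ℝ) : ℝ :=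
  ellP ηp r R - ellP ηm r R


/-!
Write `F t = ℓ_η^⊢(0,t)`, so that `ℓ_η^⊢(r,R) = F R - F r ≤ S`. The running infimum
`a t = inf_{s>t} (-F s)` is increasing, right-continuous and satisfies `-F - S ≤ a ≤ -F` on
`[0,∞)`; the upper bound holds because `ℓ_{ηm}^⊢(t,s) → 0` as `s ↓ t`. The measure
`α = x da(x)` on the positive axis has `ℓ_α^⊢(r,R) = a R - a r`, since `Re⁺(1/x) = 1/x` there.
Hence `ℓ_{η+α}^⊢(r,R) = (F + a) R - (F + a) r` is a difference of two numbers in `[-S, 0]`.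
If `ηm` has finite upper density, `a (2u) - a u ≤ ℓ_{ηm}^⊢(u,3u) ≤ ηm(3u𝔻̄)/u` is bounded, so
`∫_{(u,2u]} x da ≤ 2uK`, and summing over dyadic blocks bounds `α(t𝔻̄)` linearly in `t`.
-/

open Set Topology
open scoped ENNReal

def VanishesNearZero (ν : Measure ℂ) : Prop := ∃ δ > 0, ν (Metric.ball 0 δ) = 0

lemma annulus_eq_preimage (r R : ℝ) : annulus r R = (‖·‖) ⁻¹' Ioc r R := rfl

lemma measurableSet_annulus (r R : ℝ) : MeasurableSet (annulus r R) :=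
  measurable_norm measurableSet_Ioc

lemma annulus_subset_closedBall (r R : ℝ) : annulus r R ⊆ Metric.closedBall 0 R :=
  fun _ hz => mem_closedBall_zero_iff.2 hz.2

lemma annulus_subset_ball {r R ε : ℝ} (h : R < ε) : annulus r R ⊆ Metric.ball 0 ε :=
  fun _ hz => mem_ball_zero_iff.2 (hz.2.trans_lt h)

lemma annulus_union_annulus {r s R : ℝ} (hrs : r ≤ s) (hsR : s ≤ R) :
    annulus r s ∪ annulus s R = annulus r R := by
  simp only [annulus_eq_preimage, ← preimage_union, Ioc_union_Ioc_eq_Ioc hrs hsR]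

lemma disjoint_annulus (r s R : ℝ) : Disjoint (annulus r s) (annulus s R) := by
  simp only [annulus_eq_preimage]
  exact (Ioc_disjoint_Ioc_of_le le_rfl).preimage _

lemma measure_annulus_lt_top (ν : Measure ℂ) [IsFiniteMeasureOnCompacts ν] (r R : ℝ) :
    ν (annulus r R) < ∞ :=
  measure_lt_top_of_subset (annulus_subset_closedBall r R)
    (isCompact_closedBall 0 R).measure_lt_top.ne

lemma max_re_one_div_le (z : ℂ) : max (1 / z).re 0 ≤ ‖z‖⁻¹ :=
  max_le ((Complex.re_le_norm _).trans (by rw [one_div, norm_inv])) (by positivity)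

lemma measurable_max_re_one_div : Measurable fun z : ℂ => max (1 / z).re 0 := by
  fun_prop

lemma ae_max_re_one_div_le {ν : Measure ℂ} {s : Set ℂ} {δ : ℝ} (hδ : 0 < δ)
    (h : ∀ᵐ z ∂ν.restrict s, δ ≤ ‖z‖) : ∀ᵐ z ∂ν.restrict s, ‖max (1 / z).re 0‖ ≤ δ⁻¹ := by
  filter_upwards [h] with z hz
  rw [Real.norm_of_nonneg (le_max_right _ _)]
  exact (max_re_one_div_le z).trans (inv_anti₀ hδ hz)

lemma VanishesNearZero.exists_ae_le_norm {ν : Measure ℂ} (hν : VanishesNearZero ν) :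
    ∃ δ > 0, ∀ᵐ z ∂ν, δ ≤ ‖z‖ := by
  obtain ⟨δ, hδ, hball⟩ := hν
  refine ⟨δ, hδ, measure_mono_null (fun z hz => ?_) hball⟩
  simpa using hz

lemma ellP_eq_zero_of_lt {ν : Measure ℂ} {r R ε : ℝ} (hν : ν (Metric.ball 0 ε) = 0) (hR : R < ε) :
    ellP ν r R = 0 := by
  rw [ellP, Measure.restrict_eq_zero.2 (measure_mono_null (annulus_subset_ball hR) hν),
    integral_zero_measure]

section ellP

variable {ν : Measure ℂ} [IsFiniteMeasureOnCompacts ν] {r s R : ℝ}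

lemma ellP_nonneg (ν : Measure ℂ) (r R : ℝ) : 0 ≤ ellP ν r R :=
  integral_nonneg fun _ => le_max_right _ _

lemma ellP_le_of_ae_le_norm {δ : ℝ} (hδ : 0 < δ) (h : ∀ᵐ z ∂ν.restrict (annulus r R), δ ≤ ‖z‖) :
    ellP ν r R ≤ ν.real (annulus r R) / δ := by
  have := norm_setIntegral_le_of_norm_le_const_ae (measure_annulus_lt_top ν r R)
    (ae_max_re_one_div_le hδ h)
  rw [div_eq_inv_mul]
  exact (le_abs_self _).trans this

lemma ellP_le_measureReal_div (hr : 0 < r) : ellP ν r R ≤ ν.real (annulus r R) / r :=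
  ellP_le_of_ae_le_norm hr <| (ae_restrict_mem (measurableSet_annulus r R)).mono fun _ hz => hz.1.le

lemma VanishesNearZero.integrableOn (hν : VanishesNearZero ν) (r R : ℝ) :
    IntegrableOn (fun z : ℂ => max (1 / z).re 0) (annulus r R) ν := by
  obtain ⟨δ, hδ, h⟩ := hν.exists_ae_le_norm
  exact Measure.integrableOn_of_bounded (measure_annulus_lt_top ν r R).ne
    measurable_max_re_one_div.aestronglyMeasurable (ae_max_re_one_div_le hδ (ae_restrict_of_ae h))

lemma ellP_add_ellP (hν : VanishesNearZero ν) (hrs : r ≤ s) (hsR : s ≤ R) :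
    ellP ν r s + ellP ν s R = ellP ν r R := by
  rw [ellP, ellP, ellP, ← annulus_union_annulus hrs hsR, setIntegral_union (disjoint_annulus r s R)
    (measurableSet_annulus s R) (hν.integrableOn r s) (hν.integrableOn s R)]

lemma ellP_add_measure {μ : Measure ℂ} [IsFiniteMeasureOnCompacts μ] (hμ : VanishesNearZero μ)
    (hν : VanishesNearZero ν) (r R : ℝ) : ellP (μ + ν) r R = ellP μ r R + ellP ν r R := by
  rw [ellP, Measure.restrict_add, integral_add_measure (hμ.integrableOn r R) (hν.integrableOn r R)]
  rfl

lemma tendsto_ellP_nhdsGT (hν : VanishesNearZero ν) (t : ℝ) :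
    Tendsto (ellP ν t) (𝓝[>] t) (𝓝 0) := by
  obtain ⟨δ, hδ, h⟩ := hν.exists_ae_le_norm
  have hmeas : Tendsto (fun s => ν (annulus t s)) (𝓝[>] t) (𝓝 0) := by
    have hinter : ⋂ s > t, annulus t s = ∅ := by
      refine eq_empty_of_forall_notMem fun z hz => ?_
      simp only [mem_iInter] at hz
      have ht := (hz (t + 1) (by linarith)).1
      have := (hz ((t + ‖z‖) / 2) (by linarith)).2
      linarith
    have := tendsto_measure_biInter_gt (μ := ν) (s := annulus t)
      (fun s _ => (measurableSet_annulus t s).nullMeasurableSet)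
      (fun i j _ hij z hz => ⟨hz.1, hz.2.trans hij⟩)
      ⟨t + 1, by linarith, (measure_annulus_lt_top ν t _).ne⟩
    rwa [hinter, measure_empty] at this
  have hreal : Tendsto (fun s => ν.real (annulus t s) / δ) (𝓝[>] t) (𝓝 0) := by
    simpa [measureReal_def] using
      ((ENNReal.tendsto_toReal ENNReal.zero_ne_top).comp hmeas).div_const δ
  exact tendsto_of_tendsto_of_tendsto_of_le_of_le tendsto_const_nhds hreal
    (fun s => ellP_nonneg ν t s) (fun s => ellP_le_of_ae_le_norm hδ (ae_restrict_of_ae h))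

end ellP

section infIoi

variable {g : ℝ → ℝ}

lemma ciInf_Ioi_le (hg : BddBelow (range g)) {t s : ℝ} (hts : t < s) : ⨅ u : Ioi t, g u ≤ g s :=
  ciInf_le (hg.mono (range_comp_subset_range _ g)) (⟨s, hts⟩ : Ioi t)

lemma monotone_ciInf_Ioi (hg : BddBelow (range g)) : Monotone fun t : ℝ => ⨅ u : Ioi t, g u :=
  fun _ _ htt' => le_ciInf fun s => ciInf_Ioi_le hg (htt'.trans_lt s.2)

lemma continuousWithinAt_ciInf_Ioi (hg : BddBelow (range g)) (t : ℝ) :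
    ContinuousWithinAt (fun t : ℝ => ⨅ u : Ioi t, g u) (Ici t) t := by
  refine tendsto_order.2 ⟨fun b hb => ?_, fun b hb => ?_⟩
  · filter_upwards [self_mem_nhdsWithin] with y hy using hb.trans_le (monotone_ciInf_Ioi hg hy)
  · obtain ⟨⟨s, hs⟩, hgs⟩ := exists_lt_of_ciInf_lt hb
    filter_upwards [Ico_mem_nhdsGE hs] with y hy using (ciInf_Ioi_le hg hy.2).trans_lt hgs

/-- The paper takes the infimum over `s ≥ t`; the strict inequality makes it right-continuous. -/
noncomputable def infIoiStieltjes (hg : BddBelow (range g)) : StieltjesFunction ℝ where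
  toFun t := ⨅ s : Ioi t, g s
  mono' := monotone_ciInf_Ioi hg
  right_continuous' := continuousWithinAt_ciInf_Ioi hg

variable (hg : BddBelow (range g))

lemma infIoiStieltjes_le {t s : ℝ} (hts : t < s) : infIoiStieltjes hg t ≤ g s :=
  ciInf_Ioi_le hg hts

lemma le_infIoiStieltjes {t c : ℝ} (h : ∀ s, t < s → c ≤ g s) : c ≤ infIoiStieltjes hg t :=
  le_ciInf fun s => h s s.2

lemma infIoiStieltjes_sub_le {t t' s' c : ℝ} (hs' : t' < s') (hc : 0 ≤ c)
    (h : ∀ s ∈ Ioc t t', g s' ≤ g s + c) : infIoiStieltjes hg t' - infIoiStieltjes hg t ≤ c := by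
  suffices infIoiStieltjes hg t' - c ≤ infIoiStieltjes hg t by linarith
  refine le_infIoiStieltjes hg fun s hts => ?_
  rcases le_or_gt s t' with hst' | ht's
  · linarith [infIoiStieltjes_le hg hs', h s ⟨hts, hst'⟩]
  · linarith [infIoiStieltjes_le hg ht's]

lemma infIoiStieltjes_le_of_tendsto {t : ℝ} {e : ℝ → ℝ} (he : Tendsto e (𝓝[>] t) (𝓝 0))
    (h : ∀ s, t < s → g s ≤ g t + e s) : infIoiStieltjes hg t ≤ g t := by
  have hlim : Tendsto (fun s => g t + e s) (𝓝[>] t) (𝓝 (g t)) := by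
    simpa using tendsto_const_nhds.add he
  exact ge_of_tendsto hlim (eventually_nhdsWithin_of_forall fun s hs =>
    (infIoiStieltjes_le hg hs).trans (h s hs))

end infIoi

section posRealMeasure

variable (f : StieltjesFunction ℝ)

/-- `x df(x)` on the positive real axis: the density `ENNReal.ofReal x` vanishes for `x ≤ 0`. -/
noncomputable def posRealMeasure : Measure ℂ :=
  (f.measure.withDensity fun x => ENNReal.ofReal x).map (↑)

lemma posRealMeasure_apply {E : Set ℂ} (hE : MeasurableSet E) :
    posRealMeasure f E = ∫⁻ x in (↑) ⁻¹' E ∩ Ioi 0, ENNReal.ofReal x ∂f.measure := by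
  have hemb := Complex.isometry_ofReal.isClosedEmbedding.measurableEmbedding
  have hE' : MeasurableSet (((↑) : ℝ → ℂ) ⁻¹' E) := hemb.measurable hE
  rw [posRealMeasure, hemb.map_apply, withDensity_apply _ hE',
    ← lintegral_inter_add_sdiff _ _ measurableSet_Ioi]
  have hdiff : ∫⁻ x in (↑) ⁻¹' E \ Ioi 0, ENNReal.ofReal x ∂f.measure = 0 :=
    (setLIntegral_congr_fun (hE'.diff measurableSet_Ioi) fun x hx =>
      ENNReal.ofReal_eq_zero.2 (not_lt.1 hx.2)).trans lintegral_zero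
  rw [hdiff, add_zero]

lemma posRealMeasure_closedBall (t : ℝ) :
    posRealMeasure f (Metric.closedBall 0 t) = ∫⁻ x in Ioc 0 t, ENNReal.ofReal x ∂f.measure := by
  rw [posRealMeasure_apply f measurableSet_closedBall]
  congr 2
  ext x
  simp only [mem_inter_iff, mem_preimage, mem_closedBall_zero_iff, Complex.norm_real,
    Real.norm_eq_abs, mem_Ioi, mem_Ioc]
  constructor
  · rintro ⟨hx, hx0⟩
    exact ⟨hx0, (le_abs_self x).trans hx⟩
  · rintro ⟨hx0, hx⟩
    exact ⟨(abs_of_pos hx0).trans_le hx, hx0⟩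

lemma setLIntegral_Ioc_le (a b : ℝ) :
    ∫⁻ x in Ioc a b, ENNReal.ofReal x ∂f.measure ≤ ENNReal.ofReal b * ENNReal.ofReal (f b - f a) :=
  calc ∫⁻ x in Ioc a b, ENNReal.ofReal x ∂f.measure
      ≤ ∫⁻ _ in Ioc a b, ENNReal.ofReal b ∂f.measure :=
        setLIntegral_mono measurable_const fun x hx => ENNReal.ofReal_le_ofReal hx.2
    _ = ENNReal.ofReal b * ENNReal.ofReal (f b - f a) := by
        rw [setLIntegral_const, f.measure_Ioc]

instance : IsFiniteMeasureOnCompacts (posRealMeasure f) where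
  lt_top_of_isCompact K hK := by
    obtain ⟨t, ht⟩ := hK.isBounded.subset_closedBall 0
    calc posRealMeasure f K ≤ posRealMeasure f (Metric.closedBall 0 t) := measure_mono ht
      _ ≤ ENNReal.ofReal t * ENNReal.ofReal (f t - f 0) := by
          rw [posRealMeasure_closedBall]; exact setLIntegral_Ioc_le f 0 t
      _ < ∞ := ENNReal.mul_lt_top ENNReal.ofReal_lt_top ENNReal.ofReal_lt_top

lemma posRealMeasure_compl_posReal : posRealMeasure f {z : ℂ | ¬ (0 < z.re ∧ z.im = 0)} = 0 := by
  have hE : MeasurableSet {z : ℂ | ¬ (0 < z.re ∧ z.im = 0)} :=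
    ((measurableSet_lt measurable_const Complex.measurable_re).inter
      (Complex.measurable_im (measurableSet_singleton 0))).compl
  have hempty : ((↑) : ℝ → ℂ) ⁻¹' {z : ℂ | ¬ (0 < z.re ∧ z.im = 0)} ∩ Ioi 0 = ∅ := by
    ext x
    simp
  rw [posRealMeasure_apply f hE, hempty, Measure.restrict_empty, lintegral_zero_measure]

lemma vanishesNearZero_posRealMeasure {δ : ℝ} (hδ : 0 < δ) (h : f δ ≤ f 0) :
    VanishesNearZero (posRealMeasure f) := by
  refine ⟨δ, hδ, measure_mono_null (Metric.ball_subset_closedBall) ?_⟩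
  rw [posRealMeasure_closedBall, Measure.restrict_eq_zero.2, lintegral_zero_measure]
  rw [f.measure_Ioc, ENNReal.ofReal_eq_zero]
  linarith

omit f in
lemma preimage_annulus_inter_Ioi {r R : ℝ} (hr : 0 ≤ r) :
    ((↑) : ℝ → ℂ) ⁻¹' annulus r R ∩ Ioi 0 = Ioc r R := by
  ext x
  simp only [annulus, mem_inter_iff, mem_preimage, mem_ofPred_eq, Complex.norm_real,
    Real.norm_eq_abs, mem_Ioi, mem_Ioc]
  constructor
  · rintro ⟨hx, hx0⟩
    rwa [abs_of_pos hx0] at hx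
  · rintro hx
    have hx0 : 0 < x := hr.trans_lt hx.1
    exact ⟨by rwa [abs_of_pos hx0], hx0⟩

omit f in
lemma toNNReal_mul_max_re_one_div (x : ℝ) :
    (x.toNNReal : ℝ) * max (1 / (x : ℂ)).re 0 = (Ioi 0).indicator 1 x := by
  rcases le_or_gt x 0 with hx | hx
  · simp [Real.toNNReal_of_nonpos hx, hx]
  · rw [indicator_of_mem (show x ∈ Ioi 0 from hx), Real.coe_toNNReal _ hx.le, ← Complex.ofReal_one,
      ← Complex.ofReal_div, Complex.ofReal_re, max_eq_left (by positivity)]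
    field_simp
    rfl

lemma ellP_posRealMeasure {r R : ℝ} (hr : 0 ≤ r) (hrR : r ≤ R) :
    ellP (posRealMeasure f) r R = f R - f r := by
  have hemb := Complex.isometry_ofReal.isClosedEmbedding.measurableEmbedding
  have hT : MeasurableSet (((↑) : ℝ → ℂ) ⁻¹' annulus r R) :=
    hemb.measurable (measurableSet_annulus r R)
  rw [ellP, posRealMeasure, hemb.setIntegral_map]
  simp only [ENNReal.ofReal]
  rw [setIntegral_withDensity_eq_setIntegral_smul measurable_real_toNNReal _ hT]
  simp only [NNReal.smul_def, smul_eq_mul, toNNReal_mul_max_re_one_div]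
  rw [setIntegral_indicator measurableSet_Ioi, preimage_annulus_inter_Ioi hr]
  simp [measureReal_def, f.measure_Ioc, sub_nonneg.2 (f.mono hrR)]

lemma setLIntegral_Ioc_le_of_doubling {r₀ K : ℝ} (hr₀ : 0 < r₀)
    (hK : ∀ u, r₀ ≤ u → f (2 * u) - f u ≤ K) (t : ℝ) :
    ∫⁻ x in Ioc 0 t, ENNReal.ofReal x ∂f.measure
      ≤ ∫⁻ x in Ioc 0 (2 * r₀), ENNReal.ofReal x ∂f.measure + ENNReal.ofReal (4 * K * t) := by
  have hK0 : 0 ≤ K := (sub_nonneg.2 (f.mono (by linarith))).trans (hK r₀ le_rfl)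
  obtain ⟨n, hn⟩ := pow_unbounded_of_one_lt (t / (2 * r₀)) one_lt_two
  rw [div_lt_iff₀ (by positivity)] at hn
  induction n generalizing t with
  | zero =>
    exact (lintegral_mono_set (Ioc_subset_Ioc_right (by linarith))).trans le_self_add
  | succ n ih =>
    rcases lt_or_ge t (2 ^ n * (2 * r₀)) with ht | ht
    · exact ih t ht
    · have ht0 : 0 < t := lt_of_lt_of_le (by positivity) ht
      have hr₀t : r₀ ≤ t / 2 := by nlinarith [one_le_pow₀ (M₀ := ℝ) one_le_two (n := n)]
      have hft : f t - f (t / 2) ≤ K := by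
        simpa only [mul_div_cancel₀ t two_ne_zero] using hK (t / 2) hr₀t
      calc ∫⁻ x in Ioc 0 t, ENNReal.ofReal x ∂f.measure
          ≤ ∫⁻ x in Ioc 0 (t / 2), ENNReal.ofReal x ∂f.measure
            + ∫⁻ x in Ioc (t / 2) t, ENNReal.ofReal x ∂f.measure := by
            rw [← Ioc_union_Ioc_eq_Ioc (b := t / 2) (by linarith) (by linarith)]
            exact lintegral_union_le _ _ _
        _ ≤ ∫⁻ x in Ioc 0 (2 * r₀), ENNReal.ofReal x ∂f.measure + ENNReal.ofReal (4 * K * (t / 2))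
            + ENNReal.ofReal t * ENNReal.ofReal K :=
            add_le_add (ih _ (by rw [pow_succ] at hn; linarith))
              ((setLIntegral_Ioc_le f _ _).trans (by gcongr))
        _ ≤ ∫⁻ x in Ioc 0 (2 * r₀), ENNReal.ofReal x ∂f.measure + ENNReal.ofReal (4 * K * t) := by
            rw [add_assoc, ← ENNReal.ofReal_mul (by linarith),
              ← ENNReal.ofReal_add (by nlinarith) (by nlinarith)]
            gcongr
            nlinarith

lemma finiteUpperDensity_posRealMeasure (h : ∃ K, ∀ᶠ u in atTop, f (2 * u) - f u ≤ K) :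
    FiniteUpperDensity (posRealMeasure f) := by
  obtain ⟨K, hK⟩ := h
  obtain ⟨r₀, hr₀⟩ := eventually_atTop.1 hK
  set r₁ := max r₀ 1
  have hr₁ : 0 < r₁ := zero_lt_one.trans_le (le_max_right _ _)
  have hK0 : 0 ≤ K := (sub_nonneg.2 (f.mono (by linarith))).trans (hr₀ r₁ (le_max_left _ _))
  set m := ∫⁻ x in Ioc 0 (2 * r₁), ENNReal.ofReal x ∂f.measure
  have hm : m ≠ ∞ := ((setLIntegral_Ioc_le f _ _).trans_lt
    (ENNReal.mul_lt_top ENNReal.ofReal_lt_top ENNReal.ofReal_lt_top)).ne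
  refine ⟨m.toReal + 4 * K, eventually_atTop.2 ⟨1, fun t ht => ?_⟩⟩
  have hdoub := setLIntegral_Ioc_le_of_doubling f hr₁
    (fun u hu => hr₀ u ((le_max_left _ _).trans hu)) t
  rw [rad, posRealMeasure_closedBall]
  calc _ ≤ (m + ENNReal.ofReal (4 * K * t)).toReal :=
        ENNReal.toReal_mono (ENNReal.add_ne_top.2 ⟨hm, ENNReal.ofReal_ne_top⟩) hdoub
    _ = m.toReal + 4 * K * t := by
        rw [ENNReal.toReal_add hm ENNReal.ofReal_ne_top, ENNReal.toReal_ofReal (by positivity)]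
    _ ≤ (m.toReal + 4 * K) * t := by nlinarith [ENNReal.toReal_nonneg (a := m)]

end posRealMeasure

lemma FiniteUpperDensity.exists_ellP_le {ν : Measure ℂ} [IsFiniteMeasureOnCompacts ν]
    (hν : FiniteUpperDensity ν) : ∃ K, ∀ᶠ u in atTop, ellP ν u (3 * u) ≤ K := by
  obtain ⟨C, hC⟩ := hν
  refine ⟨3 * |C|, ?_⟩
  filter_upwards [eventually_gt_atTop 0, (tendsto_id.const_mul_atTop three_pos).eventually hC]
    with u hu hCu
  calc ellP ν u (3 * u) ≤ ν.real (annulus u (3 * u)) / u := ellP_le_measureReal_div hu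
    _ ≤ rad ν (3 * u) / u := by
        gcongr
        exact measureReal_mono (annulus_subset_closedBall _ _)
          (isCompact_closedBall 0 _).measure_lt_top.ne
    _ ≤ C * (3 * u) / u := by gcongr; exact hCu
    _ = 3 * C := by field_simp
    _ ≤ 3 * |C| := by linarith [le_abs_self C]

section signed

variable {ηp ηm : Measure ℂ} [IsFiniteMeasureOnCompacts ηp] [IsFiniteMeasureOnCompacts ηm]
  (hp : VanishesNearZero ηp) (hm : VanishesNearZero ηm)
include hp hm

lemma ellPdiff_add_ellPdiff {r s R : ℝ} (hrs : r ≤ s) (hsR : s ≤ R) :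
    ellPdiff ηp ηm r s + ellPdiff ηp ηm s R = ellPdiff ηp ηm r R := by
  simp only [ellPdiff, ← ellP_add_ellP hp hrs hsR, ← ellP_add_ellP hm hrs hsR]
  ring

lemma neg_ellPdiff_le {r s R : ℝ} (hs : 0 ≤ s) (hrs : r ≤ s) (hsR : s ≤ R) :
    -ellPdiff ηp ηm 0 R ≤ -ellPdiff ηp ηm 0 s + ellP ηm r R := by
  rw [← ellPdiff_add_ellPdiff hp hm hs hsR, ← ellP_add_ellP hm hrs hsR]
  unfold ellPdiff
  linarith [ellP_nonneg ηp s R, ellP_nonneg ηm r s]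

variable (hbdd : BddBelow (range fun t => -ellPdiff ηp ηm 0 t))

lemma infIoiStieltjes_le_neg_ellPdiff {t : ℝ} (ht : 0 ≤ t) :
    infIoiStieltjes hbdd t ≤ -ellPdiff ηp ηm 0 t :=
  infIoiStieltjes_le_of_tendsto hbdd (tendsto_ellP_nhdsGT hm t) fun _ hts =>
    neg_ellPdiff_le hp hm ht le_rfl hts.le

lemma neg_ellPdiff_sub_le_infIoiStieltjes {S : ℝ}
    (hS : ∀ r R : ℝ, 0 ≤ r → r < R → ellPdiff ηp ηm r R ≤ S) {t : ℝ} (ht : 0 ≤ t) :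
    -ellPdiff ηp ηm 0 t - S ≤ infIoiStieltjes hbdd t :=
  le_infIoiStieltjes hbdd fun s hts => by
    linarith [hS t s ht hts, ellPdiff_add_ellPdiff hp hm ht hts.le]

lemma abs_ellPdiff_add_posRealMeasure_le {S : ℝ}
    (hS : ∀ r R : ℝ, 0 ≤ r → r < R → ellPdiff ηp ηm r R ≤ S)
    (hα : VanishesNearZero (posRealMeasure (infIoiStieltjes hbdd))) {r R : ℝ} (hr : 0 ≤ r)
    (hrR : r < R) : |ellPdiff (ηp + posRealMeasure (infIoiStieltjes hbdd)) ηm r R| ≤ 2 * S := by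
  have hR : 0 ≤ R := hr.trans hrR.le
  rw [ellPdiff, ellP_add_measure hp hα, ellP_posRealMeasure _ hr hrR.le, abs_le]
  have hsplit := ellPdiff_add_ellPdiff hp hm hr hrR.le
  have hr_le := infIoiStieltjes_le_neg_ellPdiff hp hm hbdd hr
  have hR_le := infIoiStieltjes_le_neg_ellPdiff hp hm hbdd hR
  have le_hr := neg_ellPdiff_sub_le_infIoiStieltjes hp hm hbdd hS hr
  have le_hR := neg_ellPdiff_sub_le_infIoiStieltjes hp hm hbdd hS hR
  unfold ellPdiff at *
  constructor <;> linarith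

lemma infIoiStieltjes_two_mul_sub_le {u : ℝ} (hu : 0 < u) :
    infIoiStieltjes hbdd (2 * u) - infIoiStieltjes hbdd u ≤ ellP ηm u (3 * u) :=
  infIoiStieltjes_sub_le hbdd (by linarith) (ellP_nonneg _ _ _) fun _ hs =>
    neg_ellPdiff_le hp hm (hu.le.trans hs.1.le) hs.1.le (by linarith [hs.2])

end signed

/-- For a locally finite signed measure `η = ηp - ηm` with
`0 ∉ supp η` and `ℓ_η^⊢(r,R) ≤ S` for all `0 ≤ r < R`, there is a positive
measure `α` supported on `ℝ⁺ \ {0}` with `|ℓ_{η+α}^⊢(r,R)| ≤ 2S` for all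
`0 ≤ r < R`; moreover `α` has finite upper density whenever `η` does. -/
theorem stmt6 (ηp ηm : Measure ℂ)
    [IsFiniteMeasureOnCompacts ηp] [IsFiniteMeasureOnCompacts ηm]
    (h0 : ∃ ε > (0 : ℝ), ηp (Metric.ball 0 ε) = 0 ∧ ηm (Metric.ball 0 ε) = 0)
    (S : ℝ) (hS : ∀ r R : ℝ, 0 ≤ r → r < R → ellPdiff ηp ηm r R ≤ S) :
    ∃ α : Measure ℂ, IsFiniteMeasureOnCompacts α ∧
      α {z : ℂ | ¬ (0 < z.re ∧ z.im = 0)} = 0 ∧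
      (∀ r R : ℝ, 0 ≤ r → r < R → |ellPdiff (ηp + α) ηm r R| ≤ 2 * S) ∧
      (FiniteUpperDensity ηp → FiniteUpperDensity ηm → FiniteUpperDensity α) := by
  obtain ⟨ε, hε, hp0, hm0⟩ := h0
  have hp : VanishesNearZero ηp := ⟨ε, hε, hp0⟩
  have hm : VanishesNearZero ηm := ⟨ε, hε, hm0⟩
  have hF0 : ∀ t < ε, ellPdiff ηp ηm 0 t = 0 := fun t ht => by
    rw [ellPdiff, ellP_eq_zero_of_lt hp0 ht, ellP_eq_zero_of_lt hm0 ht, sub_zero]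
  have hbdd : BddBelow (range fun t => -ellPdiff ηp ηm 0 t) := by
    refine ⟨-S, forall_mem_range.2 fun t => neg_le_neg ?_⟩
    rcases lt_or_ge t ε with ht | ht
    · linarith [hF0 t ht, hF0 (ε / 2) (by linarith), hS 0 (ε / 2) le_rfl (by linarith)]
    · exact hS 0 t le_rfl (hε.trans_le ht)
  -- `ellPdiff ηp ηm 0` vanishes on `[0, ε)`, so the running infimum is constant on `[0, ε / 2]`.
  have hα : VanishesNearZero (posRealMeasure (infIoiStieltjes hbdd)) := by
    refine vanishesNearZero_posRealMeasure _ (half_pos hε) (sub_nonpos.1 ?_)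
    refine infIoiStieltjes_sub_le hbdd (s' := 3 * ε / 4) (by linarith) le_rfl fun s hs => ?_
    linarith [hF0 s (by linarith [hs.2]), hF0 (3 * ε / 4) (by linarith)]
  refine ⟨posRealMeasure (infIoiStieltjes hbdd), inferInstance, posRealMeasure_compl_posReal _,
    fun r R hr hrR => abs_ellPdiff_add_posRealMeasure_le hp hm hbdd hS hα hr hrR,
    fun _ hdens => ?_⟩
  obtain ⟨K, hK⟩ := hdens.exists_ellP_le
  refine finiteUpperDensity_posRealMeasure _ ⟨K, ?_⟩
  filter_upwards [hK, eventually_gt_atTop 0] with u hu hu0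
  exact (infIoiStieltjes_two_mul_sub_le hp hm hbdd hu0).trans hu
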